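/- Let H be a finite-dimensional Hilbert space decomposed as an orthogonal direct sum H = ⊕_d H_d with orthogonal projections Π_d. Let ψ_in and ψ_targ be unit vectors with α_d = ‖Π_d ψ_in‖ and β_d = ‖Π_d ψ_targ‖. Then for any unitary U preserving each subspace H_d, |⟨U ψ_in, ψ_targ⟩|² ≤ (∑_d α_d β_d)². -/

import Mathlib

open scoped InnerProductSpace

/-!
Split both vectors along the orthogonal decomposition: the fidelity becomes
`∑ d ⟪Π_d (U ψin), Π_d ψtarg⟫`. Since `U` maps each `H_d` onto itself it commutes with `Π_d`,
so `‖Π_d (U ψin)‖ = ‖Π_d ψin‖`, and Cauchy–Schwarz on each summand gives the bound.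
-/

namespace OrthogonalFamily

variable {𝕜 E ι : Type*} [RCLike 𝕜] [NormedAddCommGroup E] [InnerProductSpace 𝕜 E]
  [Fintype ι] {K : ι → Submodule 𝕜 E} [∀ i, CompleteSpace (K i)]

theorem inner_eq_sum_inner_starProjection
    (hK : OrthogonalFamily 𝕜 (fun i => K i) fun i => (K i).subtypeₗᵢ) (hsup : ⨆ i, K i = ⊤)
    (x y : E) : ⟪x, y⟫_𝕜 = ∑ i, ⟪(K i).starProjection x, (K i).starProjection y⟫_𝕜 := by
  conv_lhs => rw [← hK.sum_projection_of_mem_iSup y (hsup ▸ Submodule.mem_top)]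
  rw [_root_.inner_sum]
  refine Finset.sum_congr rfl fun i _ => ?_
  rw [Submodule.inner_starProjection_left_eq_right,
    Submodule.starProjection_eq_self_iff.mpr (Submodule.starProjection_apply_mem _ y)]

theorem norm_inner_le_sum_norm_starProjection_mul
    (hK : OrthogonalFamily 𝕜 (fun i => K i) fun i => (K i).subtypeₗᵢ) (hsup : ⨆ i, K i = ⊤)
    (x y : E) :
    ‖⟪x, y⟫_𝕜‖ ≤ ∑ i, ‖(K i).starProjection x‖ * ‖(K i).starProjection y‖ := by
  rw [hK.inner_eq_sum_inner_starProjection hsup]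
  exact (norm_sum_le _ _).trans (Finset.sum_le_sum fun i _ => norm_inner_le_norm _ _)

end OrthogonalFamily

theorem Submodule.norm_starProjection_apply_eq_of_map_eq {𝕜 E : Type*} [RCLike 𝕜]
    [NormedAddCommGroup E] [InnerProductSpace 𝕜 E] (K : Submodule 𝕜 E) [K.HasOrthogonalProjection]
    (U : E ≃ₗᵢ[𝕜] E) (hU : K.map U.toLinearEquiv.toLinearMap = K) (x : E) :
    ‖K.starProjection (U x)‖ = ‖K.starProjection x‖ := by
  have h := K.starProjection_map_apply U (U x)
  simp only [hU, U.symm_apply_apply] at h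
  rw [h, U.norm_map]

theorem fidelity_bound_of_invariant_subspaces_general
    {E : Type*} [NormedAddCommGroup E] [InnerProductSpace ℂ E]
    [FiniteDimensional ℂ E]
    {ι : Type*} [Fintype ι]
    (K : ι → Submodule ℂ E)
    (horth : ∀ d d', d ≠ d' → ∀ x ∈ K d, ∀ y ∈ K d', ⟪x, y⟫_ℂ = 0)
    (hsup : (⨆ d, K d) = ⊤)
    (ψin ψtarg : E)
    (U : E ≃ₗᵢ[ℂ] E) (hU : ∀ d, (K d).map U.toLinearEquiv.toLinearMap = K d) :
    ‖(⟪U ψin, ψtarg⟫_ℂ)‖ ^ 2 ≤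
      (∑ d, ‖((K d).orthogonalProjection ψin : E)‖ *
            ‖((K d).orthogonalProjection ψtarg : E)‖) ^ 2 := by
  have hK : OrthogonalFamily ℂ (fun d => K d) fun d => (K d).subtypeₗᵢ :=
    fun d d' hdd' x y => horth d d' hdd' x x.2 y y.2
  have hbound := hK.norm_inner_le_sum_norm_starProjection_mul hsup (U ψin) ψtarg
  simp only [fun d => (K d).norm_starProjection_apply_eq_of_map_eq U (hU d) ψin] at hbound
  exact pow_le_pow_left₀ (norm_nonneg _) hbound 2

theorem fidelity_bound_of_invariant_subspaces
    {E : Type*} [NormedAddCommGroup E] [InnerProductSpace ℂ E]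
    [FiniteDimensional ℂ E]
    {ι : Type*} [Fintype ι]
    (K : ι → Submodule ℂ E)
    (horth : ∀ d d', d ≠ d' → ∀ x ∈ K d, ∀ y ∈ K d', ⟪x, y⟫_ℂ = 0)
    (hsup : (⨆ d, K d) = ⊤)
    (ψin ψtarg : E) (hin : ‖ψin‖ = 1) (htarg : ‖ψtarg‖ = 1)
    (U : E ≃ₗᵢ[ℂ] E) (hU : ∀ d, (K d).map U.toLinearEquiv.toLinearMap = K d) :
    ‖(⟪U ψin, ψtarg⟫_ℂ)‖ ^ 2 ≤
      (∑ d, ‖((K d).orthogonalProjection ψin : E)‖ *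
            ‖((K d).orthogonalProjection ψtarg : E)‖) ^ 2 :=
  fidelity_bound_of_invariant_subspaces_general K horth hsup ψin ψtarg U hU
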